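/- Let f ∈ L¹(ℝ) and α, β > 0 with αβ > 1/4. Suppose |f(x)| ≤ C e^{-α x²} for all x and |f̃(λ)| ≤ C e^{-β λ²} for all λ ∈ ℝ, where f̃ is the Fourier transform of f. Then the Beurling condition holds: ∫_ℝ ∫_ℝ |f(x)| |f̃(λ)| e^{|xλ|} dx dλ < ∞. -/

import Mathlib

open MeasureTheory

theorem hardy_implies_beurling_condition (f : ℝ → ℂ) (hf : Integrable f)
    (F : ℝ → ℂ)
    (hF : ∀ l : ℝ, F l = ∫ t : ℝ, f t * Complex.exp (-(Complex.I * l * t)))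
    (α β C : ℝ) (hα : 0 < α) (hβ : 0 < β) (hαβ : 1 / 4 < α * β)
    (hfd : ∀ x : ℝ, ‖f x‖ ≤ C * Real.exp (-(α * x ^ 2)))
    (hFd : ∀ l : ℝ, ‖F l‖ ≤ C * Real.exp (-(β * l ^ 2))) :
    Integrable (fun p : ℝ × ℝ => ‖f p.1‖ * ‖F p.2‖ * Real.exp |p.1 * p.2|) := by
  have hC : 0 ≤ C := le_trans (norm_nonneg (f 0)) (by simpa using hfd 0)
  -- choose a with 1/(4β) < a < α
  have hβ4 : 0 < 4 * β := by linarith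
  have h1 : 1 / (4 * β) < α := by
    rw [div_lt_iff₀ hβ4]; nlinarith
  obtain ⟨a, ha_gt, ha_lt⟩ : ∃ a : ℝ, 1 / (4 * β) < a ∧ a < α :=
    ⟨(α + 1 / (4 * β)) / 2, by linarith, by linarith⟩
  have ha_pos : 0 < a := lt_trans (by positivity) ha_gt
  have h4a : (0:ℝ) < 4 * a := by linarith
  have hb_pos : 0 < β - 1 / (4 * a) := by
    have : 1 / (4 * a) < β := by
      rw [div_lt_iff₀ h4a]
      rw [div_lt_iff₀ hβ4] at ha_gt
      nlinarith
    linarith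
  -- F is continuous
  have hFcont : Continuous F := by
    have hcont : Continuous fun l : ℝ => ∫ t : ℝ, f t * Complex.exp (-(Complex.I * l * t)) := by
      apply continuous_of_dominated (bound := fun t => ‖f t‖)
      · intro l
        exact hf.1.mul (Complex.continuous_exp.comp (by continuity)).aestronglyMeasurable
      · intro l
        filter_upwards with t
        rw [norm_mul]
        have : ‖Complex.exp (-(Complex.I * l * t))‖ = 1 := by
          rw [Complex.norm_exp]
          simp [Complex.exp_re]
        rw [this, mul_one]
      · exact hf.norm
      · filter_upwards with t
        exact continuous_const.mul (Complex.continuous_exp.comp (by continuity))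
    have : F = fun l : ℝ => ∫ t : ℝ, f t * Complex.exp (-(Complex.I * l * t)) :=
      funext hF
    rw [this]; exact hcont
  -- measurability
  have hmeas : AEStronglyMeasurable
      (fun p : ℝ × ℝ => ‖f p.1‖ * ‖F p.2‖ * Real.exp |p.1 * p.2|) (volume : Measure (ℝ × ℝ)) := by
    have h1 : AEStronglyMeasurable (fun p : ℝ × ℝ => ‖f p.1‖) volume :=
      hf.1.norm.comp_quasiMeasurePreserving Measure.quasiMeasurePreserving_fst
    have h2 : AEStronglyMeasurable (fun p : ℝ × ℝ => ‖F p.2‖) volume :=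
      (hFcont.aestronglyMeasurable.norm.comp_quasiMeasurePreserving
        Measure.quasiMeasurePreserving_snd)
    have h3 : Continuous fun p : ℝ × ℝ => Real.exp |p.1 * p.2| := by continuity
    exact (h1.mul h2).mul h3.aestronglyMeasurable
  -- dominating function
  have hint : Integrable (fun p : ℝ × ℝ =>
      (C * Real.exp (-(α - a) * p.1 ^ 2)) * (C * Real.exp (-(β - 1 / (4 * a)) * p.2 ^ 2))) := by
    exact Integrable.mul_prod
      (f := fun x : ℝ => C * Real.exp (-(α - a) * x ^ 2))
      (g := fun y : ℝ => C * Real.exp (-(β - 1 / (4 * a)) * y ^ 2))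
      ((integrable_exp_neg_mul_sq (by linarith : 0 < α - a)).const_mul C)
      ((integrable_exp_neg_mul_sq hb_pos).const_mul C)
  apply hint.mono hmeas
  filter_upwards with p
  rcases p with ⟨x, l⟩
  simp only
  have hfx : 0 ≤ ‖f x‖ := norm_nonneg _
  have hFl : 0 ≤ ‖F l‖ := norm_nonneg _
  rw [Real.norm_eq_abs, abs_of_nonneg (by positivity)]
  have hx2 : |x| ^ 2 = x ^ 2 := sq_abs x
  have hl2 : |l| ^ 2 = l ^ 2 := sq_abs l
  have key2 : |x| * |l| ≤ a * x ^ 2 + l ^ 2 / (4 * a) := by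
    have heq : a * |x| ^ 2 + |l| ^ 2 / (4 * a) - |x| * |l| = (2 * a * |x| - |l|) ^ 2 / (4 * a) := by
      field_simp; ring
    have hnn : (0:ℝ) ≤ (2 * a * |x| - |l|) ^ 2 / (4 * a) := by positivity
    rw [← hx2, ← hl2]
    linarith [heq ▸ hnn]
  have key : Real.exp (-(α * x ^ 2)) * Real.exp (-(β * l ^ 2)) * Real.exp |x * l|
      ≤ Real.exp (-(α - a) * x ^ 2) * Real.exp (-(β - 1 / (4 * a)) * l ^ 2) := by
    rw [← Real.exp_add, ← Real.exp_add, ← Real.exp_add]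
    apply Real.exp_le_exp.2
    rw [abs_mul]
    have hdiv : 1 / (4 * a) * l ^ 2 = l ^ 2 / (4 * a) := by ring
    have hexp : -(α - a) * x ^ 2 + -(β - 1 / (4 * a)) * l ^ 2
        = -(α * x ^ 2) + -(β * l ^ 2) + (a * x ^ 2 + 1 / (4 * a) * l ^ 2) := by ring
    rw [hexp, hdiv]
    linarith [key2]
  calc ‖f x‖ * ‖F l‖ * Real.exp |x * l|
      ≤ (C * Real.exp (-(α * x ^ 2))) * (C * Real.exp (-(β * l ^ 2))) * Real.exp |x * l| := by
        apply mul_le_mul_of_nonneg_right _ (Real.exp_nonneg _)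
        exact mul_le_mul (hfd x) (hFd l) hFl (by positivity)
    _ = C * C * (Real.exp (-(α * x ^ 2)) * Real.exp (-(β * l ^ 2)) * Real.exp |x * l|) := by ring
    _ ≤ C * C * (Real.exp (-(α - a) * x ^ 2) * Real.exp (-(β - 1 / (4 * a)) * l ^ 2)) := by
        exact mul_le_mul_of_nonneg_left key (by positivity)
    _ = C * Real.exp (-(α - a) * x ^ 2) * (C * Real.exp (-(β - 1 / (4 * a)) * l ^ 2)) := by ring
    _ ≤ ‖C * Real.exp (-(α - a) * x ^ 2) * (C * Real.exp (-(β - 1 / (4 * a)) * l ^ 2))‖ :=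
        Real.le_norm_self _
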